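/- arXiv:1606.07205 — 2 statements merged into one kernel-verified Lean document; each statement's English description precedes it below -/
import Mathlib

section
/- Let q, p ∈ R^{4,2} be nonzero vectors with q ⊥ p and (p,p) ≠ 0, and let Q³ = {y in the lightcone : (y,q) = −1, (y,p) = 0}. Then for every y ∈ Q³, the tangent space of Q³ at y, namely T_y = {v ∈ R^{4,2} : (v,y) = 0, (v,q) = 0, (v,p) = 0}, is 3-dimensional and the restriction of the bilinear form to T_y is positive definite, provided (p,p) < 0. -/
/-- The bilinear form of signature (4,2) on `ℝ⁶`. -/
noncomputable def B6 : (Fin 6 → ℝ) →ₗ[ℝ] (Fin 6 → ℝ) →ₗ[ℝ] ℝ :=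
  LinearMap.mk₂ ℝ
    (fun x y => x 0 * y 0 + x 1 * y 1 + x 2 * y 2 + x 3 * y 3 - x 4 * y 4 - x 5 * y 5)
    (by intro x x' y; simp only [Pi.add_apply]; ring)
    (by intro c x y; simp only [Pi.smul_apply, smul_eq_mul]; ring)
    (by intro x y y'; simp only [Pi.add_apply]; ring)
    (by intro c x y; simp only [Pi.smul_apply, smul_eq_mul]; ring)

lemma B6_apply' (x z : Fin 6 → ℝ) :
    B6 x z = x 0 * z 0 + x 1 * z 1 + x 2 * z 2 + x 3 * z 3 - x 4 * z 4 - x 5 * z 5 := rfl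

lemma B6_symm' (x z : Fin 6 → ℝ) : B6 x z = B6 z x := by
  simp only [B6_apply']; ring

lemma B6_pos_of' (w : Fin 6 → ℝ) (h4 : w 4 = 0) (h5 : w 5 = 0) (h0 : w ≠ 0) : 0 < B6 w w := by
  have hex : ∃ i, w i ≠ 0 := by
    by_contra h; push_neg at h; exact h0 (funext h)
  obtain ⟨i, hi⟩ := hex
  rw [B6_apply', h4, h5]
  fin_cases i <;> simp_all <;>
    nlinarith [sq_nonneg (w 0), sq_nonneg (w 1), sq_nonneg (w 2), sq_nonneg (w 3),
      mul_self_pos.mpr hi]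

/-- for `q ⊥ p` nonzero with `(p,p) < 0` and `y` in the lightcone with
`(y,q) = −1`, `(y,p) = 0`, the tangent space
`T_y = {v : (v,y) = (v,q) = (v,p) = 0}` of `Q³` at `y` is 3-dimensional and the
restriction of the form to it is positive definite. -/
theorem tangent_space_Q3 (q p y : Fin 6 → ℝ)
    (hq : q ≠ 0) (hp : p ≠ 0) (hqp : B6 q p = 0) (hpp : B6 p p < 0)
    (hy : y ≠ 0) (hyy : B6 y y = 0) (hyq : B6 y q = -1) (hyp : B6 y p = 0) :
    Module.finrank ℝ
        ↥(LinearMap.ker (B6.flip y) ⊓ LinearMap.ker (B6.flip q) ⊓ LinearMap.ker (B6.flip p)) = 3 ∧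
    ∀ v : Fin 6 → ℝ,
      B6 v y = 0 → B6 v q = 0 → B6 v p = 0 → v ≠ 0 → 0 < B6 v v := by
  constructor
  · -- dimension count: T_y is the kernel of a surjective map onto ℝ³
    set f : (Fin 6 → ℝ) →ₗ[ℝ] ℝ × ℝ × ℝ :=
      (B6.flip y).prod ((B6.flip q).prod (B6.flip p)) with hf
    have hker : LinearMap.ker f =
        LinearMap.ker (B6.flip y) ⊓ LinearMap.ker (B6.flip q) ⊓ LinearMap.ker (B6.flip p) := by
      rw [hf, LinearMap.ker_prod, LinearMap.ker_prod, inf_assoc]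
    have hsurj : Function.Surjective f := by
      rintro ⟨a, b, c⟩
      refine ⟨(-b - a * B6 q q) • y + (-a) • q + (c / B6 p p) • p, ?_⟩
      have h1 : f ((-b - a * B6 q q) • y + (-a) • q + (c / B6 p p) • p)
          = ((-b - a * B6 q q) • f y + (-a) • f q) + (c / B6 p p) • f p := by
        simp [map_add, map_smul]
      rw [h1]
      have hfy : f y = (B6 y y, B6 y q, B6 y p) := rfl
      have hfq : f q = (B6 q y, B6 q q, B6 q p) := rfl
      have hfp : f p = (B6 p y, B6 p q, B6 p p) := rfl
      rw [hfy, hfq, hfp, B6_symm' q y, B6_symm' p y, B6_symm' p q, hyy, hyq, hyp, hqp]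
      have hpp0 : B6 p p ≠ 0 := ne_of_lt hpp
      ext <;> simp <;> field_simp
    have hrank := LinearMap.finrank_range_add_finrank_ker f
    rw [LinearMap.range_eq_top.mpr hsurj, finrank_top] at hrank
    have h6 : Module.finrank ℝ (Fin 6 → ℝ) = 6 := Module.finrank_fin_fun ℝ
    have h3 : Module.finrank ℝ (ℝ × ℝ × ℝ) = 3 := by simp
    rw [← hker]
    omega
  · -- positive definiteness
    intro v hvy hvq hvp hv0
    by_contra hle
    push_neg at hle
    have hpq : B6 p q = 0 := by rw [B6_symm']; exact hqp
    have hpy : B6 p y = 0 := by rw [B6_symm']; exact hyp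
    have hyv : B6 y v = 0 := by rw [B6_symm']; exact hvy
    have hpv : B6 p v = 0 := by rw [B6_symm']; exact hvp
    -- linear independence of y, p, v
    have hind : LinearIndependent ℝ ![y, p, v] := by
      rw [Fintype.linearIndependent_iff]
      intro g hg
      rw [Fin.sum_univ_three] at hg
      simp only [Matrix.cons_val_zero, Matrix.cons_val_one, Matrix.head_cons,
        Matrix.cons_val_two, Matrix.tail_cons] at hg
      have e1 : B6 (g 0 • y + g 1 • p + g 2 • v) q = -(g 0) := by
        simp [map_add, map_smul, LinearMap.add_apply, LinearMap.smul_apply, hyq, hpq, hvq]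
      have e2 : B6 (g 0 • y + g 1 • p + g 2 • v) p = g 1 * B6 p p := by
        simp [map_add, map_smul, LinearMap.add_apply, LinearMap.smul_apply, hyp, hvp]
      rw [hg] at e1 e2
      simp only [map_zero, LinearMap.zero_apply] at e1 e2
      have hg0 : g 0 = 0 := by linarith [e1.symm]
      have hg1 : g 1 = 0 := by
        rcases mul_eq_zero.mp e2.symm with h | h
        · exact h
        · exact absurd h (ne_of_lt hpp)
      have hg2 : g 2 = 0 := by
        rw [hg0, hg1] at hg
        simp only [zero_smul, zero_add] at hg
        rcases smul_eq_zero.mp hg with h | h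
        · exact h
        · exact absurd h hv0
      intro i; fin_cases i <;> assumption
    set U : Submodule ℝ (Fin 6 → ℝ) := Submodule.span ℝ (Set.range ![y, p, v]) with hU
    have hUrank : Module.finrank ℝ U = 3 := by
      rw [finrank_span_eq_card hind]
      simp
    -- project U to coordinates 4, 5; the kernel is nontrivial
    set π : U →ₗ[ℝ] ℝ × ℝ :=
      ((LinearMap.proj 4 : (Fin 6 → ℝ) →ₗ[ℝ] ℝ).prod (LinearMap.proj 5)).comp U.subtype with hπ
    have hrn := LinearMap.finrank_range_add_finrank_ker π
    have hrle : Module.finrank ℝ (LinearMap.range π) ≤ 2 := by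
      have := Submodule.finrank_le (LinearMap.range π)
      simpa using this
    have hkerpos : LinearMap.ker π ≠ ⊥ := by
      intro hbot
      rw [hbot, finrank_bot, hUrank] at hrn
      omega
    obtain ⟨w, hwker, hw0⟩ := Submodule.exists_mem_ne_zero_of_ne_bot hkerpos
    have hw4 : (w : Fin 6 → ℝ) 4 = 0 := congrArg Prod.fst (LinearMap.mem_ker.mp hwker)
    have hw5 : (w : Fin 6 → ℝ) 5 = 0 := congrArg Prod.snd (LinearMap.mem_ker.mp hwker)
    have hwv0 : (w : Fin 6 → ℝ) ≠ 0 := by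
      simpa [Submodule.coe_eq_zero] using hw0
    have hpos : 0 < B6 w w := B6_pos_of' w hw4 hw5 hwv0
    -- w is a combination of y, p, v, hence B6 w w ≤ 0: contradiction
    have hmem : (w : Fin 6 → ℝ) ∈ Submodule.span ℝ (Set.range ![y, p, v]) := w.2
    rw [Submodule.mem_span_range_iff_exists_fun] at hmem
    obtain ⟨c, hc⟩ := hmem
    rw [Fin.sum_univ_three] at hc
    simp only [Matrix.cons_val_zero, Matrix.cons_val_one, Matrix.head_cons,
      Matrix.cons_val_two, Matrix.tail_cons] at hc
    have hBw : B6 w w = c 1 * c 1 * B6 p p + c 2 * c 2 * B6 v v := by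
      rw [← hc]
      simp only [map_add, map_smul, LinearMap.add_apply, LinearMap.smul_apply, smul_eq_mul,
        hyy, hyp, hyv, hpy, hpv, hvy, hvp]
      ring
    nlinarith [mul_self_nonneg (c 1), mul_self_nonneg (c 2)]
end

section
/- Let V be a real vector space with nondegenerate symmetric bilinear form, S₁, S₂ complementary orthogonal subspaces (V = S₁ ⊕⊥ S₂), and let N be an endomorphism of V with N(S₁) ⊆ S₂ and N(S₂) ⊆ S₁. Then N is skew-symmetric with respect to the bilinear form if and only if N lies in the span of {a∧b : a ∈ S₁, b ∈ S₂}, where a∧b is the endomorphism v ↦ (a,v)b − (b,v)a. -/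
/-!
Restricted to `S₁`, the form is nondegenerate, so a basis `e` of `S₁` has a `B`-dual basis `f`
in `S₁`. For `N` skew and interchanging `S₁` and `S₂`, the element `∑ᵢ fᵢ ∧ N eᵢ` of the wedge
span agrees with `N` on `S₁` (where it is `x ↦ N (∑ᵢ B x fᵢ • eᵢ)`) and on `S₂` (where skewness
turns it into `y ↦ ∑ᵢ B (N y) eᵢ • fᵢ`), hence equals `N`. Conversely every wedge is skew and the
skew endomorphisms form a subspace.
-/

open LinearMap (BilinForm)

namespace LinearMap.BilinForm

variable {K V : Type*} [Field K] [AddCommGroup V] [Module K V]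

def wedge (B : BilinForm K V) (a b : V) : Module.End K V :=
  (B a).smulRight b - (B b).smulRight a

@[simp]
lemma wedge_apply (B : BilinForm K V) (a b v : V) : B.wedge a b v = B a v • b - B b v • a :=
  rfl

variable {B : BilinForm K V}

lemma isSkewAdjoint_iff_apply_eq_neg (N : Module.End K V) :
    B.IsSkewAdjoint N ↔ ∀ x y, B (N x) y = -B x (N y) := by
  simp only [IsSkewAdjoint, IsAdjointPair, Pi.neg_apply, map_neg]

lemma isSkewAdjoint_wedge (hB : B.IsSymm) (a b : V) : B.IsSkewAdjoint (B.wedge a b) := by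
  rw [isSkewAdjoint_iff_apply_eq_neg]
  intro x y
  simp only [wedge_apply, map_sub, map_smul, LinearMap.sub_apply, LinearMap.smul_apply,
    smul_eq_mul, hB.eq x a, hB.eq x b]
  ring

lemma restrict_nondegenerate_of_codisjoint (hB : B.IsSymm) (hsep : B.SeparatingLeft)
    {S₁ S₂ : Submodule K V} (hcod : Codisjoint S₁ S₂) (horth : ∀ a ∈ S₁, ∀ b ∈ S₂, B a b = 0) :
    (B.restrict S₁).Nondegenerate := by
  refine B.nondegenerate_restrict_of_disjoint_orthogonal hB.isRefl
    (Submodule.disjoint_def.mpr fun x hx hxorth ↦ hsep x fun v ↦ ?_)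
  have hv : v ∈ S₁ ⊔ S₂ := hcod.eq_top ▸ Submodule.mem_top
  obtain ⟨a, ha, b, hb, rfl⟩ := Submodule.mem_sup.mp hv
  rw [map_add, hB.eq x a, (mem_orthogonal_iff.mp hxorth) a ha, horth x hx b hb, add_zero]

variable {ι : Type*} [Fintype ι] [DecidableEq ι]

lemma sum_apply_smul_dualBasis {W : Submodule K V} (hW : (B.restrict W).Nondegenerate)
    (e : Module.Basis ι K W) {z : V} (hz : z ∈ W) :
    ∑ i, B z (e i) • ((B.restrict W).dualBasis hW e i : V) = z := by
  have := congrArg W.subtype (((B.restrict W).dualBasis hW e).sum_repr ⟨z, hz⟩)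
  simpa only [map_sum, map_smul, dualBasis_repr_apply, restrict_apply, domRestrict_apply,
      Submodule.subtype_apply]
    using this

lemma eq_sum_wedge_dualBasis (hB : B.IsSymm) {S₁ S₂ : Submodule K V} (hcod : Codisjoint S₁ S₂)
    (horth : ∀ a ∈ S₁, ∀ b ∈ S₂, B a b = 0) (hS₁ : (B.restrict S₁).Nondegenerate)
    (e : Module.Basis ι K S₁) {N : Module.End K V} (hN : B.IsSkewAdjoint N)
    (hN1 : ∀ a ∈ S₁, N a ∈ S₂) (hN2 : ∀ b ∈ S₂, N b ∈ S₁) :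
    N = ∑ i, B.wedge ((B.restrict S₁).dualBasis hS₁ e i) (N (e i)) := by
  set f := (B.restrict S₁).dualBasis hS₁ e
  have hf : (B.restrict S₁).dualBasis hS₁ f = e := dualBasis_dualBasis hS₁ (hB.restrict S₁) e
  refine LinearMap.ext_on_codisjoint hcod (fun x hx ↦ ?_) (fun y hy ↦ ?_)
  · have hvanish (i : ι) : B (N (e i)) x = 0 := by
      rw [hB.eq]; exact horth x hx _ (hN1 _ (e i).2)
    calc N x = N (∑ i, B x (f i) • (e i : V)) := by
            rw [← hf, sum_apply_smul_dualBasis hS₁ f hx]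
      _ = _ := by
            simp only [map_sum, map_smul, LinearMap.sum_apply, wedge_apply,
              hvanish, zero_smul, sub_zero, hB.eq x]
  · have hvanish (i : ι) : B (f i) y = 0 := horth _ (f i).2 y hy
    have hskew (i : ι) : B (N (e i)) y = -B (N y) (e i) := by
      rw [(isSkewAdjoint_iff_apply_eq_neg N).mp hN, hB.eq _ (N y)]
    calc N y = ∑ i, B (N y) (e i) • (f i : V) := (sum_apply_smul_dualBasis hS₁ e (hN2 y hy)).symm
      _ = _ := by
            simp only [LinearMap.sum_apply, wedge_apply, hvanish, zero_smul,
              zero_sub, hskew, neg_smul, neg_neg]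

end LinearMap.BilinForm

open LinearMap.BilinForm in
/-- for orthogonal complementary subspaces `S₁, S₂` and an endomorphism `N`
interchanging them, `N` is skew-symmetric w.r.t. the nondegenerate symmetric form `B` iff
`N` lies in the span of `{a∧b : a ∈ S₁, b ∈ S₂}`, where `a∧b : v ↦ (a,v)b − (b,v)a`. -/
theorem skew_iff_in_wedge_span {V : Type*} [AddCommGroup V] [Module ℝ V]
    [FiniteDimensional ℝ V]
    (B : V →ₗ[ℝ] V →ₗ[ℝ] ℝ)
    (hsymm : ∀ x y : V, B x y = B y x)
    (hnd : ∀ x : V, (∀ y : V, B x y = 0) → x = 0)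
    (S₁ S₂ : Submodule ℝ V)
    (hcompl : IsCompl S₁ S₂)
    (horth : ∀ a ∈ S₁, ∀ b ∈ S₂, B a b = 0)
    (N : V →ₗ[ℝ] V)
    (hN1 : ∀ a ∈ S₁, N a ∈ S₂) (hN2 : ∀ b ∈ S₂, N b ∈ S₁) :
    (∀ x y : V, B (N x) y = - B x (N y)) ↔
      N ∈ Submodule.span ℝ
        {T : V →ₗ[ℝ] V | ∃ a ∈ S₁, ∃ b ∈ S₂,
          T = (B a).smulRight b - (B b).smulRight a} := by
  have hB : IsSymm B := ⟨hsymm⟩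
  have hS₁ := restrict_nondegenerate_of_codisjoint hB hnd hcompl.codisjoint horth
  rw [← isSkewAdjoint_iff_apply_eq_neg]
  constructor
  · intro hN
    rw [eq_sum_wedge_dualBasis hB hcompl.codisjoint horth hS₁ (Module.finBasis ℝ S₁) hN hN1 hN2]
    exact Submodule.sum_mem _ fun i _ ↦ Submodule.subset_span
      ⟨_, Subtype.prop _, _, hN1 _ (Subtype.prop _), rfl⟩
  · intro hN
    refine (LinearMap.mem_skewAdjointSubmodule N).mp (Submodule.span_le.mpr ?_ hN)
    rintro _ ⟨a, -, b, -, rfl⟩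
    exact (LinearMap.mem_skewAdjointSubmodule _).mpr (isSkewAdjoint_wedge hB a b)
end
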